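/- Let N ≥ 1 and a be integers with 1 ≤ a ≤ N, let ε, p, q, C be real numbers with ε > 0, p > 1, C > 0, and let (M_k)_{k ≥ 0} be real numbers satisfying |M_k| < C·(log(Nk+N+a))^q / (k^p + ε) for all k ≥ 0. Then lim_{n→∞} ∑_{k=0}^{n} |M_k| · N·((a/N)_{n+1})² / ((n−k)! · (2a/N)_{n+k+1}) = (N / B(a/N, a/N)) · ∑_{k=0}^{∞} |M_k|, where B(x,y) = Γ(x)Γ(y)/Γ(x+y) is the Beta function; in particular the series ∑_{k=0}^{∞} |M_k| converges. -/

import Mathlib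

open Finset Filter

/-- The Pochhammer symbol (rising factorial) `(x)_n = x(x+1)⋯(x+n−1)`. -/
noncomputable def poch (x : ℝ) (n : ℕ) : ℝ := (ascPochhammer ℝ n).eval x

open Topology Asymptotics

/-! With `x = a/N`, the weight of `|M_k|` is `N · w_n(k)`, where
`w_n(k) = (x)_{n+1}² / ((n-k)! (2x)_{n+k+1})`. At `k = 0` it is a quotient of Euler's
approximants `GammaSeq`, so `w_n(0) → Γ(2x)/Γ(x)² = 1/B(x,x)`; the ratio
`w_n(k+1)/w_n(k) = (n-k)/(2x+n+k+1)` lies in `[0,1]` and tends to `1`, so `w_n(k) ≤ w_n(0)` and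
every `w_n(k)` has the same limit. The growth bound gives `|M_k| = O(k^{-(p+1)/2})`, and
dominated convergence for series (Tannery's theorem) yields the limit. -/

lemma poch_succ (x : ℝ) (n : ℕ) : poch x (n + 1) = poch x n * (x + n) := by
  simp [poch, ascPochhammer_succ_right]

lemma poch_eq_prod_range (x : ℝ) (n : ℕ) : poch x n = ∏ j ∈ range n, (x + j) := by
  induction n with
  | zero => simp [poch]
  | succ n ih => rw [poch_succ, ih, prod_range_succ]

lemma poch_pos {x : ℝ} (hx : 0 < x) (n : ℕ) : 0 < poch x n := ascPochhammer_pos n x hx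

lemma Real.GammaSeq_eq_poch (s : ℝ) (n : ℕ) :
    Real.GammaSeq s n = (n : ℝ) ^ s * n.factorial / poch s (n + 1) := by
  rw [Real.GammaSeq, poch_eq_prod_range]

lemma summable_log_rpow_mul_rpow_neg {g : ℕ → ℝ} (hg : Tendsto g atTop atTop)
    (hgO : g =O[atTop] fun k => (k : ℝ)) (q : ℝ) {p : ℝ} (hp : 1 < p) :
    Summable fun k => Real.log (g k) ^ q * (k : ℝ) ^ (-p) := by
  have hs : 0 < (p - 1) / 2 := by linarith
  have hlog : (fun k => Real.log (g k) ^ q) =o[atTop] fun k => g k ^ ((p - 1) / 2) :=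
    (isLittleO_log_rpow_rpow_atTop q hs).comp_tendsto hg
  have hpow : (fun k => g k ^ ((p - 1) / 2)) =O[atTop] fun k => (k : ℝ) ^ ((p - 1) / 2) :=
    hgO.rpow hs.le (Eventually.of_forall fun k => Nat.cast_nonneg k)
  have hexp : (fun k : ℕ => (k : ℝ) ^ ((p - 1) / 2) * (k : ℝ) ^ (-p)) =ᶠ[atTop]
      fun k => (k : ℝ) ^ (-((p + 1) / 2)) := by
    filter_upwards [eventually_ge_atTop 1] with k hk
    rw [← Real.rpow_add (by exact_mod_cast hk)]
    ring_nf
  refine summable_of_isBigO_nat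
    (Real.summable_nat_rpow.2 (by linarith : -((p + 1) / 2) < -1)) ?_
  exact ((hlog.isBigO.trans hpow).mul (isBigO_refl _ _)).trans_eventuallyEq hexp

lemma summable_of_abs_lt_log_rpow_div {f g : ℕ → ℝ} (hg : Tendsto g atTop atTop)
    (hgO : g =O[atTop] fun k => (k : ℝ)) {ε p q C : ℝ} (hε : 0 ≤ ε) (hp : 1 < p)
    (hf : ∀ᶠ k in atTop, |f k| < C * Real.log (g k) ^ q / ((k : ℝ) ^ p + ε)) :
    Summable f := by
  refine .of_norm_bounded_eventually_nat
    ((summable_log_rpow_mul_rpow_neg hg hgO q hp).mul_left C) ?_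
  filter_upwards [hf, eventually_ge_atTop 1] with k hfk hk
  have hkp : 0 < (k : ℝ) ^ p := Real.rpow_pos_of_pos (by exact_mod_cast hk) p
  -- the strict bound forces the numerator to be positive, so `ε` can be dropped
  have hnum : 0 < C * Real.log (g k) ^ q :=
    (div_pos_iff_of_pos_right (by linarith)).1 ((abs_nonneg _).trans_lt hfk)
  calc ‖f k‖ ≤ C * Real.log (g k) ^ q / ((k : ℝ) ^ p + ε) := hfk.le
    _ ≤ C * Real.log (g k) ^ q / (k : ℝ) ^ p := by gcongr; linarith
    _ = C * (Real.log (g k) ^ q * (k : ℝ) ^ (-p)) := by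
      rw [Real.rpow_neg (Nat.cast_nonneg k), div_eq_mul_inv, mul_assoc]

theorem tendsto_sum_range_mul_of_tendsto {c : ℕ → ℝ} (hc : Summable c) {w : ℕ → ℕ → ℝ}
    {L D : ℝ} (hlim : ∀ k, Tendsto (fun n => w n k) atTop (𝓝 L))
    (hbound : ∀ n k, k ≤ n → |w n k| ≤ D) :
    Tendsto (fun n => ∑ k ∈ range (n + 1), c k * w n k) atTop (𝓝 ((∑' k, c k) * L)) := by
  rw [← tsum_mul_right]
  refine Tendsto.congr (fun n => (sum_eq_tsum_indicator _ _).symm) ?_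
  refine tendsto_tsum_of_dominated_convergence (hc.abs.mul_right D) (fun k => ?_)
    (.of_forall fun n k => ?_)
  · refine ((hlim k).const_mul (c k)).congr' ?_
    filter_upwards [eventually_ge_atTop k] with n hn
    rw [Set.indicator_of_mem (by simpa using Nat.lt_succ_of_le hn)]
  · by_cases hk : k ≤ n
    · rw [Set.indicator_of_mem (by simpa using Nat.lt_succ_of_le hk), norm_mul,
        Real.norm_eq_abs, Real.norm_eq_abs]
      exact mul_le_mul_of_nonneg_left (hbound n k hk) (abs_nonneg _)
    · rw [Set.indicator_of_notMem (by simpa using hk), norm_zero]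
      exact mul_nonneg (abs_nonneg _) ((abs_nonneg _).trans (hbound 0 0 le_rfl))

noncomputable def betaWeight (x : ℝ) (n k : ℕ) : ℝ :=
  poch x (n + 1) ^ 2 / ((n - k).factorial * poch (2 * x) (n + k + 1))

section betaWeight

variable {x : ℝ}

lemma betaWeight_pos (hx : 0 < x) (n k : ℕ) : 0 < betaWeight x n k := by
  have := poch_pos hx (n + 1)
  have := poch_pos (by positivity : 0 < 2 * x) (n + k + 1)
  unfold betaWeight
  positivity

lemma betaWeight_succ {n k : ℕ} (hk : k < n) :
    betaWeight x n (k + 1) = betaWeight x n k * ((n - k) / (2 * x + n + k + 1)) := by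
  have hfac : (n - k).factorial = (n - (k + 1) + 1) * (n - (k + 1)).factorial := by
    rw [← Nat.factorial_succ]; congr 1; omega
  have hcast : ((n - (k + 1) + 1 : ℕ) : ℝ) = n - k := by
    rw [show n - (k + 1) + 1 = n - k by omega, Nat.cast_sub hk.le]
  have hnk : (n : ℝ) - k ≠ 0 := sub_ne_zero.2 (by exact_mod_cast hk.ne')
  rw [betaWeight, betaWeight, hfac, show n + (k + 1) + 1 = n + k + 1 + 1 by ring,
    poch_succ (2 * x) (n + k + 1), Nat.cast_mul, hcast]
  push_cast
  field_simp
  ring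

lemma betaWeight_succ_le (hx : 0 < x) {n k : ℕ} (hk : k < n) :
    betaWeight x n (k + 1) ≤ betaWeight x n k := by
  rw [betaWeight_succ hk]
  refine mul_le_of_le_one_right (betaWeight_pos hx n k).le ?_
  rw [div_le_one (by positivity)]
  linarith

lemma betaWeight_le_betaWeight_zero (hx : 0 < x) {n k : ℕ} (hk : k ≤ n) :
    betaWeight x n k ≤ betaWeight x n 0 := by
  induction k with
  | zero => rfl
  | succ k ih => exact (betaWeight_succ_le hx hk).trans (ih (by omega))

lemma betaWeight_zero_eq_GammaSeq {n : ℕ} (hn : n ≠ 0) :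
    betaWeight x n 0 =
      Real.GammaSeq (x + x) n / (Real.GammaSeq x n * Real.GammaSeq x n) := by
  rw [betaWeight, Real.GammaSeq_eq_poch, Real.GammaSeq_eq_poch, two_mul,
    Real.rpow_add (by positivity)]
  simp only [Nat.sub_zero, Nat.add_zero]
  field_simp

lemma tendsto_betaWeight_zero (hx : 0 < x) :
    Tendsto (betaWeight x · 0) atTop
      (𝓝 (Real.Gamma x * Real.Gamma x / Real.Gamma (x + x))⁻¹) := by
  have hΓ : Real.Gamma x * Real.Gamma x ≠ 0 :=
    (mul_pos (Real.Gamma_pos_of_pos hx) (Real.Gamma_pos_of_pos hx)).ne'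
  have hΓx := Real.GammaSeq_tendsto_Gamma x
  rw [inv_div]
  refine ((Real.GammaSeq_tendsto_Gamma (x + x)).div (hΓx.mul hΓx) hΓ).congr' ?_
  filter_upwards [eventually_ne_atTop 0] with n hn
  exact (betaWeight_zero_eq_GammaSeq hn).symm

lemma tendsto_betaWeight (hx : 0 < x) (k : ℕ) :
    Tendsto (betaWeight x · k) atTop
      (𝓝 (Real.Gamma x * Real.Gamma x / Real.Gamma (x + x))⁻¹) := by
  induction k with
  | zero => exact tendsto_betaWeight_zero hx
  | succ k ih =>
    have hratio :
        Tendsto (fun n : ℕ => ((n : ℝ) - k) / (2 * x + n + k + 1)) atTop (𝓝 1) := by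
      have := tendsto_add_mul_div_add_mul_atTop_nhds (-(k : ℝ)) (2 * x + k + 1) 1 one_ne_zero
      rw [div_one] at this
      refine this.congr fun n => ?_
      ring_nf
    rw [← mul_one (_)⁻¹]
    refine (ih.mul hratio).congr' ?_
    filter_upwards [eventually_gt_atTop k] with n hn
    exact (betaWeight_succ hn).symm

lemma exists_abs_betaWeight_le (hx : 0 < x) :
    ∃ D, ∀ n k, k ≤ n → |betaWeight x n k| ≤ D := by
  obtain ⟨D, hD⟩ := (tendsto_betaWeight_zero hx).bddAbove_range
  refine ⟨D, fun n k hk => ?_⟩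
  rw [abs_of_pos (betaWeight_pos hx n k)]
  exact (betaWeight_le_betaWeight_zero hx hk).trans (hD (Set.mem_range_self n))

end betaWeight

theorem tendsto_sum_M_U_general
    (N a : ℕ) (h1 : 1 ≤ a) (h2 : a ≤ N)
    (ε p q C : ℝ) (hε : 0 < ε) (hp : 1 < p)
    (M : ℕ → ℝ)
    (hM : ∀ k : ℕ, |M k| <
      C * Real.log ((N : ℝ) * k + N + a) ^ q / ((k : ℝ) ^ p + ε)) :
    Summable (fun k : ℕ => |M k|) ∧
    Tendsto (fun n : ℕ => ∑ k ∈ Finset.range (n + 1),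
        |M k| * ((N : ℝ) * poch ((a : ℝ) / N) (n + 1) ^ 2 /
          ((n - k).factorial * poch (2 * (a : ℝ) / N) (n + k + 1))))
      atTop
      (nhds (((N : ℝ) /
          (Real.Gamma ((a : ℝ) / N) * Real.Gamma ((a : ℝ) / N) /
            Real.Gamma ((a : ℝ) / N + (a : ℝ) / N))) * ∑' k : ℕ, |M k|)) := by
  have hN : (0 : ℝ) < N := by exact_mod_cast h1.trans h2
  have hx : 0 < (a : ℝ) / N := div_pos (by exact_mod_cast h1) hN
  have hconst (c : ℝ) : (fun _ : ℕ => c) =O[atTop] fun k => (k : ℝ) :=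
    ((isLittleO_const_id_atTop c).comp_tendsto tendsto_natCast_atTop_atTop).isBigO
  have hlog_arg : Tendsto (fun k : ℕ => (N : ℝ) * k + N + a) atTop atTop :=
    tendsto_atTop_add_const_right _ _ (tendsto_atTop_add_const_right _ _
      (tendsto_natCast_atTop_atTop.const_mul_atTop hN))
  have hlog_arg_O : (fun k : ℕ => (N : ℝ) * k + N + a) =O[atTop] fun k => (k : ℝ) :=
    (((isBigO_refl _ _).const_mul_left _).add (hconst _)).add (hconst _)
  have hsum : Summable fun k => |M k| :=
    (summable_of_abs_lt_log_rpow_div hlog_arg hlog_arg_O hε.le hp (.of_forall hM)).abs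
  refine ⟨hsum, ?_⟩
  have hweight (n k : ℕ) : (N : ℝ) * poch ((a : ℝ) / N) (n + 1) ^ 2 /
      ((n - k).factorial * poch (2 * (a : ℝ) / N) (n + k + 1)) =
        N * betaWeight (a / N) n k := by
    rw [betaWeight, mul_div_assoc, mul_div_assoc]
  obtain ⟨D, hD⟩ := exists_abs_betaWeight_le hx
  simp_rw [hweight]
  rw [div_eq_mul_inv (N : ℝ), mul_comm]
  refine tendsto_sum_range_mul_of_tendsto hsum (fun k => (tendsto_betaWeight hx k).const_mul _)
    (D := N * D) fun n k hk => ?_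
  rw [abs_mul, abs_of_pos hN]
  exact mul_le_mul_of_nonneg_left (hD n k hk) hN.le

/-- Lemma 3.2: if `|M_k| < C·(log(Nk+N+a))^q / (k^p + ε)` with `ε > 0`, `p > 1`, `C > 0`,
then `∑_{k=0}^{∞} |M_k|` converges and
`lim_{n→∞} ∑_{k=0}^{n} |M_k|·N((a/N)_{n+1})²/((n−k)!(2a/N)_{n+k+1})
  = (N / B(a/N, a/N)) · ∑_{k=0}^{∞} |M_k|`, where `B(x,y) = Γ(x)Γ(y)/Γ(x+y)`. -/
theorem tendsto_sum_M_U
    (N a : ℕ) (h1 : 1 ≤ a) (h2 : a ≤ N)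
    (ε p q C : ℝ) (hε : 0 < ε) (hp : 1 < p) (hC : 0 < C)
    (M : ℕ → ℝ)
    (hM : ∀ k : ℕ, |M k| <
      C * Real.log ((N : ℝ) * k + N + a) ^ q / ((k : ℝ) ^ p + ε)) :
    Summable (fun k : ℕ => |M k|) ∧
    Tendsto (fun n : ℕ => ∑ k ∈ Finset.range (n + 1),
        |M k| * ((N : ℝ) * poch ((a : ℝ) / N) (n + 1) ^ 2 /
          ((n - k).factorial * poch (2 * (a : ℝ) / N) (n + k + 1))))
      atTop
      (nhds (((N : ℝ) /
          (Real.Gamma ((a : ℝ) / N) * Real.Gamma ((a : ℝ) / N) /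
            Real.Gamma ((a : ℝ) / N + (a : ℝ) / N))) * ∑' k : ℕ, |M k|)) :=
  tendsto_sum_M_U_general N a h1 h2 ε p q C hε hp M hM
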